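/- For every k ≥ 1 there exists a connected graph G on 3k vertices whose minimum simultaneous dominating set has size k and whose minimum vertex cover has size 2k − 1; hence the bound |C′| ≤ 2|S′| − 1 is tight. -/

import Mathlib

open SimpleGraph

variable {V : Type*}

/-- Number of connected components of a graph. -/
noncomputable def numComponents (G : SimpleGraph V) : ℕ := Nat.card G.ConnectedComponent

/-- A vertex is a cut vertex if its removal increases the number of connected components. -/
def IsCutVertex (G : SimpleGraph V) (v : V) : Prop :=
  numComponents G < numComponents (G.induce {u | u ≠ v})

/-- `T` is a spanning tree of `G`: a subgraph on all vertices of `G` that is a tree. -/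
def IsSpanningTree (G T : SimpleGraph V) : Prop := T ≤ G ∧ T.IsTree

/-- `v` is dominated by `S` in the graph `T`. -/
def DominatedIn (T : SimpleGraph V) (S : Set V) (v : V) : Prop :=
  v ∈ S ∨ ∃ u ∈ S, T.Adj v u

/-- `v` is simultaneously dominated by `S`: dominated in every spanning tree of `G`. -/
def SimDominated (G : SimpleGraph V) (S : Set V) (v : V) : Prop :=
  ∀ T : SimpleGraph V, IsSpanningTree G T → DominatedIn T S v

/-- `S` is a simultaneous dominating set of `G`. -/
def IsSDSet (G : SimpleGraph V) (S : Set V) : Prop := ∀ v, SimDominated G S v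

/-- `C` is a vertex cover of `G`. -/
def IsVertexCover (G : SimpleGraph V) (C : Set V) : Prop :=
  ∀ ⦃u v : V⦄, G.Adj u v → u ∈ C ∨ v ∈ C

/-- A block of `G`: a maximal vertex set inducing a connected subgraph without cut vertices. -/
def IsBlock (G : SimpleGraph V) (B : Set V) : Prop :=
  B.Nonempty ∧ (G.induce B).Connected ∧ (∀ x, ¬ IsCutVertex (G.induce B) x) ∧
    ∀ B' : Set V, B ⊆ B' → (G.induce B').Connected →
      (∀ x, ¬ IsCutVertex (G.induce B') x) → B' = B

/-- 2-connected: connected, at least 3 vertices, no cut vertex. -/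
def TwoConnected (G : SimpleGraph V) [Fintype V] : Prop :=
  G.Connected ∧ 3 ≤ Fintype.card V ∧ ∀ v, ¬ IsCutVertex G v

/-- Colours 1, 0, 0̂. -/
inductive Col : Type
  | one | zero | zhat
deriving DecidableEq

/-- `S` is an `f`-respecting simultaneous dominating set of `G`. -/
def RespSDS (G : SimpleGraph V) (f : V → Col) (S : Set V) : Prop :=
  (∀ v, f v = Col.one → v ∈ S) ∧ ∀ v, f v = Col.zhat → SimDominated G S v

/-- A minimum `f`-respecting simultaneous dominating set. -/
def MinRespSDS (G : SimpleGraph V) (f : V → Col) (S : Set V) : Prop :=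
  RespSDS G f S ∧ ∀ S' : Set V, RespSDS G f S' → S.ncard ≤ S'.ncard

/-!
Both edges of each pendant path `(0, i) - (1, i) - (2, i)` lie in every spanning tree: `(2, i)` is
a leaf, and `(0, i) - (1, i)` is the only edge leaving `{(1, i), (2, i)}`. So the middle vertices
`(1, i)` form a simultaneous dominating set. Conversely, a simultaneous dominating set must dominate
each leaf `(2, i)` in some spanning tree, so it meets each of the `k` disjoint sets
`{(1, i), (2, i)}`; a vertex cover meets them too (they are edges) and misses at most one clique
vertex, which gives `k + (k - 1)`.
-/

section Transport

variable {W : Type*} {G : SimpleGraph V} {G' : SimpleGraph W}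

theorem IsSpanningTree.comap_iso (φ : G ≃g G') {T : SimpleGraph W}
    (hT : IsSpanningTree G' T) : IsSpanningTree G (T.comap φ) :=
  ⟨fun _ _ h => φ.map_adj_iff.mp (hT.1 h), (Iso.comap φ.toEquiv T).isTree_iff.mpr hT.2⟩

theorem IsSDSet.image_iso (φ : G ≃g G') {S : Set V} (hS : IsSDSet G S) :
    IsSDSet G' (φ '' S) := by
  intro w T hT
  rcases hS (φ.symm w) _ (hT.comap_iso φ) with h | ⟨u, hu, hadj⟩
  · exact Or.inl ⟨_, h, φ.apply_symm_apply w⟩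
  · exact Or.inr ⟨φ u, Set.mem_image_of_mem φ hu, by simpa using hadj⟩

theorem IsVertexCover.image_iso (φ : G ≃g G') {C : Set V} (hC : _root_.IsVertexCover G C) :
    _root_.IsVertexCover G' (φ '' C) := fun u v h =>
  (hC (φ.symm.map_adj_iff.mpr h)).imp (fun hu => ⟨_, hu, φ.apply_symm_apply u⟩)
    (fun hv => ⟨_, hv, φ.apply_symm_apply v⟩)

end Transport

theorem SimpleGraph.Connected.adj_of_forall_boundary_adj {G T : SimpleGraph V}
    (hT : T.Connected) (hle : T ≤ G) {A : Set V} {x y : V} (hx : x ∈ A) (hy : y ∉ A)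
    (h : ∀ u v, G.Adj u v → u ∈ A → v ∉ A → u = x ∧ v = y) : T.Adj x y := by
  obtain ⟨d, -, hd, hd'⟩ := (hT.preconnected x y).some.exists_boundary_dart A hx hy
  obtain ⟨hx', hy'⟩ := h _ _ (hle d.adj) hd hd'
  exact hx' ▸ hy' ▸ d.adj

open Function in
theorem Set.nat_card_le_ncard_of_inter_nonempty {ι : Type*} {S : Set V} (hS : S.Finite)
    {P : ι → Set V} (hP : Pairwise (Disjoint on P)) (h : ∀ i, (S ∩ P i).Nonempty) :
    Nat.card ι ≤ S.ncard := by
  choose f hf using h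
  rw [← Set.ncard_univ]
  refine Set.ncard_le_ncard_of_injOn f (fun i _ => (hf i).1) (fun i _ j _ hij => ?_) hS
  by_contra hne
  exact Set.disjoint_left.mp (hP hne) (hf i).2 (hij ▸ (hf j).2)

theorem IsVertexCover.ncard_le_ncard_inter_add_one_of_isClique {G : SimpleGraph V} {C s : Set V}
    (hC : _root_.IsVertexCover G C) (hs : G.IsClique s) (hfin : s.Finite) :
    s.ncard ≤ (s ∩ C).ncard + 1 := by
  rw [← Set.ncard_inter_add_ncard_sdiff_eq_ncard s C hfin, add_le_add_iff_left]
  refine (Set.ncard_le_one hfin.sdiff).mpr fun x hx y hy => ?_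
  by_contra hne
  rcases hC (hs hx.1 hy.1 hne) with h | h
  exacts [hx.2 h, hy.2 h]

/-- Vertex `(0, i)` is the clique vertex `i`, and `(0, i) - (1, i) - (2, i)` is its pendant path. -/
def cliqueWithPendantPaths (ι : Type*) : SimpleGraph (Fin 3 × ι) where
  Adj u v := (u.1 = 0 ∧ v.1 = 0 ∧ u.2 ≠ v.2) ∨
    (u.2 = v.2 ∧ (u.1.val + 1 = v.1.val ∨ v.1.val + 1 = u.1.val))
  symm := ⟨fun u v h => by
    rcases h with ⟨h0, h1, h2⟩ | ⟨h0, h1⟩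
    exacts [Or.inl ⟨h1, h0, h2.symm⟩, Or.inr ⟨h0.symm, h1.symm⟩]⟩
  loopless := ⟨fun u h => by
    rcases h with ⟨-, -, h⟩ | ⟨-, h⟩
    exacts [h rfl, by omega]⟩

namespace cliqueWithPendantPaths

variable {ι : Type*}

def layer (j : Fin 3) : Set (Fin 3 × ι) := {v | v.1 = j}

def pendantPath (i : ι) : Set (Fin 3 × ι) := {(1, i), (2, i)}

@[simp] theorem adj_iff {u v : Fin 3 × ι} :
    (cliqueWithPendantPaths ι).Adj u v ↔ (u.1 = 0 ∧ v.1 = 0 ∧ u.2 ≠ v.2) ∨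
      (u.2 = v.2 ∧ (u.1.val + 1 = v.1.val ∨ v.1.val + 1 = u.1.val)) := Iff.rfl

theorem adj_two_iff {i : ι} {v : Fin 3 × ι} :
    (cliqueWithPendantPaths ι).Adj (2, i) v ↔ v = (1, i) := by
  obtain ⟨j, i'⟩ := v
  simp only [adj_iff, Prod.mk.injEq]
  fin_cases j <;> simp [eq_comm]

theorem eq_of_adj_of_mem_pendantPath {i : ι} {u v : Fin 3 × ι}
    (h : (cliqueWithPendantPaths ι).Adj u v) (hu : u ∈ pendantPath i)
    (hv : v ∉ pendantPath i) : u = (1, i) ∧ v = (0, i) := by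
  obtain ⟨j, i'⟩ := v
  simp only [pendantPath, Set.mem_insert_iff, Set.mem_singleton_iff] at hu hv
  rcases hu with rfl | rfl <;> fin_cases j <;> simp_all [eq_comm]

theorem reachable_zero_layer (i : ι) (j : Fin 3) :
    (cliqueWithPendantPaths ι).Reachable (0, i) (j, i) := by
  have h01 : (cliqueWithPendantPaths ι).Adj (0, i) (1, i) := by simp
  have h12 : (cliqueWithPendantPaths ι).Adj (1, i) (2, i) := by simp
  fin_cases j
  exacts [.rfl, h01.reachable, h01.reachable.trans h12.reachable]

theorem connected [Nonempty ι] : (cliqueWithPendantPaths ι).Connected := by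
  obtain ⟨i₀⟩ := ‹Nonempty ι›
  refine (connected_iff_exists_forall_reachable _).mpr ⟨(0, i₀), fun ⟨j, i⟩ => ?_⟩
  refine Reachable.trans ?_ (reachable_zero_layer i j)
  by_cases h : i₀ = i
  · rw [h]
  · exact Adj.reachable (by simp [h])

section SpanningTree

variable {T : SimpleGraph (Fin 3 × ι)} (hT : IsSpanningTree (cliqueWithPendantPaths ι) T)
  (i : ι)
include hT

theorem adj_two_one_of_isSpanningTree : T.Adj (2, i) (1, i) :=
  hT.2.connected.adj_of_forall_boundary_adj hT.1 (A := {(2, i)}) rfl (y := (1, i)) (by simp)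
    fun _ _ h hu _ => by
      obtain rfl := hu
      exact ⟨rfl, adj_two_iff.mp h⟩

theorem adj_zero_one_of_isSpanningTree : T.Adj (0, i) (1, i) :=
  (hT.2.connected.adj_of_forall_boundary_adj hT.1 (A := pendantPath i) (by simp [pendantPath])
    (by simp [pendantPath]) fun _ _ h => eq_of_adj_of_mem_pendantPath h).symm

end SpanningTree

theorem isSDSet_layer_one : IsSDSet (cliqueWithPendantPaths ι) (layer 1) := by
  rintro ⟨j, i⟩ T hT
  fin_cases j
  · exact Or.inr ⟨(1, i), rfl, adj_zero_one_of_isSpanningTree hT i⟩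
  · exact Or.inl rfl
  · exact Or.inr ⟨(1, i), rfl, adj_two_one_of_isSpanningTree hT i⟩

theorem ncard_layer (j : Fin 3) : (layer j : Set (Fin 3 × ι)).ncard = Nat.card ι := by
  rw [show layer j = Prod.mk j '' Set.univ by ext ⟨j', i⟩; simp [layer, eq_comm],
    Set.ncard_image_of_injective _ (Prod.mk_right_injective j), Set.ncard_univ]

open Function in
theorem pairwise_disjoint_pendantPath :
    Pairwise (Disjoint on (pendantPath : ι → Set (Fin 3 × ι))) := by
  intro i i' h
  simp [onFun, pendantPath, Ne.symm h]

theorem inter_pendantPath_nonempty_of_isSDSet {S : Set (Fin 3 × ι)}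
    (hS : IsSDSet (cliqueWithPendantPaths ι) S) (i : ι) : (S ∩ pendantPath i).Nonempty := by
  have : Nonempty ι := ⟨i⟩
  obtain ⟨T, hle, hT⟩ := (connected (ι := ι)).exists_isTree_le
  rcases hS (2, i) T ⟨hle, hT⟩ with h | ⟨u, hu, hadj⟩
  · exact ⟨_, h, by simp [pendantPath]⟩
  · obtain rfl := adj_two_iff.mp (hle hadj)
    exact ⟨_, hu, by simp [pendantPath]⟩

theorem le_ncard_of_isSDSet [Finite ι] {S : Set (Fin 3 × ι)}
    (hS : IsSDSet (cliqueWithPendantPaths ι) S) : Nat.card ι ≤ S.ncard :=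
  Set.nat_card_le_ncard_of_inter_nonempty (Set.toFinite S) pairwise_disjoint_pendantPath
    (inter_pendantPath_nonempty_of_isSDSet hS)

theorem isClique_layer_zero : (cliqueWithPendantPaths ι).IsClique (layer 0) := by
  rintro ⟨j, i⟩ (rfl : j = 0) ⟨j', i'⟩ (rfl : j' = 0) h
  simpa using h

def vertexCover (i₀ : ι) : Set (Fin 3 × ι) := layer 1 ∪ (layer 0 \ {(0, i₀)})

theorem isVertexCover_vertexCover (i₀ : ι) :
    _root_.IsVertexCover (cliqueWithPendantPaths ι) (vertexCover i₀) := by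
  rintro ⟨j, i⟩ ⟨j', i'⟩ h
  fin_cases j <;> fin_cases j' <;> simp_all [vertexCover, layer]
  exact not_and_or.mp fun ⟨hi, hi'⟩ => h (hi.trans hi'.symm)

theorem ncard_vertexCover [Finite ι] (i₀ : ι) :
    (vertexCover i₀).ncard = 2 * Nat.card ι - 1 := by
  have : 0 < Nat.card ι := Nat.card_pos_iff.mpr ⟨⟨i₀⟩, inferInstance⟩
  have hdisj : Disjoint (layer 1) (layer 0 \ {((0 : Fin 3), i₀)}) :=
    Set.disjoint_left.mpr fun v h1 h2 => by simp_all [layer]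
  rw [vertexCover, Set.ncard_union_eq hdisj,
    Set.ncard_sdiff_singleton_of_mem (show ((0 : Fin 3), i₀) ∈ layer 0 from rfl), ncard_layer,
    ncard_layer]
  omega

theorem le_ncard_of_isVertexCover [Finite ι] {C : Set (Fin 3 × ι)}
    (hC : _root_.IsVertexCover (cliqueWithPendantPaths ι) C) :
    2 * Nat.card ι - 1 ≤ C.ncard := by
  have hclique := hC.ncard_le_ncard_inter_add_one_of_isClique isClique_layer_zero (Set.toFinite _)
  have hpaths : Nat.card ι ≤ (C \ layer 0).ncard :=
    Set.nat_card_le_ncard_of_inter_nonempty (Set.toFinite _) pairwise_disjoint_pendantPath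
      fun i => by
        rcases hC (show (cliqueWithPendantPaths ι).Adj (1, i) (2, i) by simp) with h | h <;>
          exact ⟨_, ⟨h, by simp [layer]⟩, by simp [pendantPath]⟩
  rw [ncard_layer, Set.inter_comm] at hclique
  rw [← Set.ncard_inter_add_ncard_sdiff_eq_ncard C (layer 0)]
  omega

end cliqueWithPendantPaths

open cliqueWithPendantPaths in
/-- For every `k ≥ 1` there is a connected graph on `3k` vertices whose minimum
SD-set has size `k` and whose minimum vertex cover has size `2k - 1`. -/
theorem stmt7 (k : ℕ) (hk : 1 ≤ k) :
    ∃ G : SimpleGraph (Fin (3 * k)), G.Connected ∧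
      (∃ S : Set (Fin (3 * k)), IsSDSet G S ∧ S.ncard = k ∧
        ∀ S' : Set (Fin (3 * k)), IsSDSet G S' → k ≤ S'.ncard) ∧
      (∃ C : Set (Fin (3 * k)), _root_.IsVertexCover G C ∧ C.ncard = 2 * k - 1 ∧
        ∀ C' : Set (Fin (3 * k)), _root_.IsVertexCover G C' → 2 * k - 1 ≤ C'.ncard) := by
  have : Nonempty (Fin k) := ⟨⟨0, hk⟩⟩
  let φ := Iso.map finProdFinEquiv (cliqueWithPendantPaths (Fin k))
  have hφ (s) : (φ '' s).ncard = s.ncard := Set.ncard_image_of_injective s φ.injective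
  have hφ' (s) : (φ.symm '' s).ncard = s.ncard := Set.ncard_image_of_injective s φ.symm.injective
  refine ⟨_, φ.connected_iff.mp connected,
    ⟨φ '' layer 1, isSDSet_layer_one.image_iso φ, ?_, fun S hS => ?_⟩,
    ⟨φ '' vertexCover ⟨0, hk⟩, (isVertexCover_vertexCover _).image_iso φ, ?_,
      fun C hC => ?_⟩⟩
  · rw [hφ, ncard_layer, Nat.card_fin]
  · simpa [hφ'] using le_ncard_of_isSDSet (hS.image_iso φ.symm)
  · rw [hφ, ncard_vertexCover, Nat.card_fin]
  · simpa [hφ'] using le_ncard_of_isVertexCover (hC.image_iso φ.symm)
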